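/- arXiv:1806.03955 — 3 statements merged into one kernel-verified Lean document; each statement's English description precedes it below -/
import Mathlib

section
/- Let I be an ideal of R = ℂ[x,y] such that n = dim_ℂ R/I is finite, and let k = dim_ℂ I/(𝔪·I). Then n = k(k-1)/2 if and only if I = 𝔪^{k-1}. -/
/-!
Let `d₀` be the order of `I` (the least `d` with `I ⊄ 𝔪^(d+1)`) and `L_d(J)` the space of
degree-`d` initial forms of `J`. Comparing `𝔪^d + I` with `𝔪^(d+1) + I` degree by degree, and
using `L_d(I) = 0` for `d < d₀` and `dim R_d = d + 1`, gives `n = d₀(d₀+1)/2 + dim (𝔪^d₀ + I)/I`.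
On the other hand `μ(I) ≤ d₀ + 1`: filter `I/𝔪I` by the images of `I ∩ 𝔪^d`; the `d`-th step has
dimension at most `dim L_d(I) - dim L_d(𝔪I)`, while `L_{d+1}(𝔪I) ⊇ x L_d(I) + y L_d(I)`, which has
dimension `> dim L_d(I)` once `L_d(I) ≠ 0`, so the sum telescopes to at most `d₀ + 1`.
Thus `k(k-1)/2 ≤ d₀(d₀+1)/2 ≤ n`, and equality forces `k = d₀ + 1` and `𝔪^d₀ ⊆ I ⊆ 𝔪^d₀`.
-/

open MvPolynomial

noncomputable section

/-- The polynomial ring `R = ℂ[x,y]`. -/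
abbrev Rpoly : Type := MvPolynomial (Fin 2) ℂ

/-- The maximal ideal `𝔪 = ⟨x, y⟩` of `R` at the origin. -/
def mIdeal : Ideal Rpoly := Ideal.span {X 0, X 1}

/-- `μ(I) = dim_ℂ I/(𝔪·I)`, computed as the ℂ-dimension of the image of `I`
in `R/(𝔪·I)` (this image is precisely `I/(𝔪·I)` since `𝔪·I ⊆ I`). -/
noncomputable def mu (I : Ideal Rpoly) : ℕ :=
  Module.finrank ℂ
    (Submodule.restrictScalars ℂ (I.map (Ideal.Quotient.mk (mIdeal * I))))

open Module

section Homogeneous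

variable {σ R : Type*} [CommRing R] {d : ℕ} {f : MvPolynomial σ R}

theorem homogeneousComponent_eq_zero_of_mem_pow_succ (hf : f ∈ idealOfVars σ R ^ (d + 1)) :
    homogeneousComponent d f = 0 :=
  homogeneousComponent_eq_zero' _ _ fun m hm ↦ by
    have := (mem_pow_idealOfVars_iff _ _).mp hf m hm
    omega

theorem sub_homogeneousComponent_mem_pow_succ (hf : f ∈ idealOfVars σ R ^ d) :
    f - homogeneousComponent d f ∈ idealOfVars σ R ^ (d + 1) := by
  classical
  rw [mem_pow_idealOfVars_iff'] at hf ⊢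
  intro m hm
  rw [coeff_sub, coeff_homogeneousComponent]
  split_ifs with h
  · exact sub_self _
  · rw [hf m (by omega), sub_zero]

theorem homogeneousSubmodule_le_pow :
    homogeneousSubmodule σ R d ≤ (idealOfVars σ R ^ d).restrictScalars R := fun f hf ↦
  (mem_pow_idealOfVars_iff _ _).mpr fun m hm ↦ by
    rw [Finsupp.degree_eq_weight_one]; exact (hf (mem_support_iff.mp hm)).ge

theorem pow_restrictScalars_eq_homogeneousSubmodule_sup :
    (idealOfVars σ R ^ d).restrictScalars R =
      homogeneousSubmodule σ R d ⊔ (idealOfVars σ R ^ (d + 1)).restrictScalars R := by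
  refine le_antisymm (fun f hf ↦ Submodule.mem_sup.mpr ⟨_, homogeneousComponent_mem d f, _,
    sub_homogeneousComponent_mem_pow_succ hf, add_sub_cancel _ _⟩) ?_
  exact sup_le homogeneousSubmodule_le_pow
    (Submodule.restrictScalars_mono _ (Ideal.pow_le_pow_right d.le_succ))

theorem sub_C_constantCoeff_mem_idealOfVars (r : MvPolynomial σ R) :
    r - C (constantCoeff r) ∈ idealOfVars σ R := by
  rw [← pow_one (idealOfVars σ R), mem_pow_idealOfVars_iff']
  intro m hm
  obtain rfl : m = 0 := (Finsupp.degree_eq_zero_iff m).mp (by omega)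
  simp [constantCoeff_eq]

end Homogeneous

theorem finrank_homogeneousSubmodule {σ K : Type*} [Field K] [Fintype σ] (d : ℕ) :
    finrank K (homogeneousSubmodule σ K d) = (Fintype.card σ + d - 1).choose d := by
  classical
  have hset : {m : σ →₀ ℕ | m.degree = d} =
      ((Finset.univ : Finset σ).finsuppAntidiag d : Set (σ →₀ ℕ)) := by
    ext m; simp [Finsupp.degree_eq_sum]
  rw [homogeneousSubmodule_eq_finsupp_supported, ← restrictSupport,
    finrank_eq_nat_card_basis (basisRestrictSupport K _), hset, Nat.card_coe_set_eq,
    Set.ncard_coe_finset, Finset.card_finsuppAntidiag_nat_eq_choose, Finset.card_univ]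

section LinearAlgebra

variable {K V W U : Type*} [Field K] [AddCommGroup V] [Module K V] [AddCommGroup W] [Module K W]
  [AddCommGroup U] [Module K U]

theorem Submodule.finrank_map_add_finrank_inf_ker (f : V →ₗ[K] W) (H : Submodule K V)
    [FiniteDimensional K H] :
    finrank K (H.map f) + finrank K ↥(H ⊓ LinearMap.ker f) = finrank K H := by
  have := LinearMap.finrank_range_add_finrank_ker (f.domRestrict H)
  rwa [LinearMap.range_domRestrict, LinearMap.ker_domRestrict, ← Submodule.finrank_map_subtype_eq,
    Submodule.map_comap_subtype] at this

theorem Submodule.finrank_map_mkQ_add_finrank {P Q : Submodule K V} (hQP : Q ≤ P)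
    [FiniteDimensional K P] :
    finrank K (P.map Q.mkQ) + finrank K Q = finrank K P := by
  have := P.finrank_map_add_finrank_inf_ker Q.mkQ
  rwa [Submodule.ker_mkQ, inf_eq_right.mpr hQP] at this

theorem Submodule.finrank_map_sup_add_finrank_inf_sup_ker (q : V →ₗ[K] W) (H P : Submodule K V)
    [FiniteDimensional K H] [FiniteDimensional K W] :
    finrank K ↥((H ⊔ P).map q) + finrank K ↥(H ⊓ (P ⊔ LinearMap.ker q)) =
      finrank K (P.map q) + finrank K H := by
  have hker : LinearMap.ker ((P.map q).mkQ ∘ₗ q) = P ⊔ LinearMap.ker q := by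
    rw [LinearMap.ker_comp, Submodule.ker_mkQ, Submodule.comap_map_eq]
  have hmap : H.map ((P.map q).mkQ ∘ₗ q) = ((H ⊔ P).map q).map (P.map q).mkQ := by
    rw [Submodule.map_comp, Submodule.map_sup, Submodule.map_sup,
      Submodule.mkQ_map_self, sup_bot_eq]
  have h₁ := H.finrank_map_add_finrank_inf_ker ((P.map q).mkQ ∘ₗ q)
  have h₂ := Submodule.finrank_map_mkQ_add_finrank
    (Submodule.map_mono (f := q) (le_sup_right : P ≤ H ⊔ P))
  rw [hker, hmap] at h₁
  omega

theorem Submodule.finrank_map_le_finrank_map_of_ker (f : V →ₗ[K] W) (g : V →ₗ[K] U)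
    (A : Submodule K V) [FiniteDimensional K (A.map f)]
    (h : ∀ a ∈ A, f a = 0 → g a = 0) :
    finrank K (A.map g) ≤ finrank K (A.map f) := by
  have hker : LinearMap.ker (f.domRestrict A) ≤ LinearMap.ker (g.domRestrict A) :=
    fun a ha ↦ h a a.2 ha
  have hf : FiniteDimensional K (LinearMap.range (f.domRestrict A)) := by
    rwa [LinearMap.range_domRestrict]
  have : FiniteDimensional K (A ⧸ LinearMap.ker (f.domRestrict A)) :=
    .equiv (f.domRestrict A).quotKerEquivRange.symm
  calc finrank K (A.map g)
      = finrank K (LinearMap.range ((LinearMap.ker (f.domRestrict A)).liftQ _ hker)) := by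
        rw [Submodule.range_liftQ, LinearMap.range_domRestrict]
    _ ≤ finrank K (A ⧸ LinearMap.ker (f.domRestrict A)) := LinearMap.finrank_range_le _
    _ = finrank K (A.map f) := by
        rw [(f.domRestrict A).quotKerEquivRange.finrank_eq, LinearMap.range_domRestrict]

-- `A.map q / Q` is a quotient of a subspace of `P' / Q'`.
theorem Submodule.finrank_map_add_finrank_le {A : Submodule K V} {q : V →ₗ[K] W}
    {φ : V →ₗ[K] U} {Q : Submodule K W} {Q' P' : Submodule K U}
    [FiniteDimensional K (A.map q)] [FiniteDimensional K P']
    (hQ : Q ≤ A.map q) (hQ' : Q' ≤ P') (hφ : A.map φ ≤ P') (h : ∀ a ∈ A, φ a ∈ Q' → q a ∈ Q) :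
    finrank K (A.map q) + finrank K Q' ≤ finrank K Q + finrank K P' := by
  have hle : A.map (Q'.mkQ ∘ₗ φ) ≤ P'.map Q'.mkQ := by
    rw [Submodule.map_comp]
    exact Submodule.map_mono hφ
  have : FiniteDimensional K (A.map (Q'.mkQ ∘ₗ φ)) := Submodule.finiteDimensional_of_le hle
  have h₁ := Submodule.finrank_map_le_finrank_map_of_ker (Q'.mkQ ∘ₗ φ) (Q.mkQ ∘ₗ q) A
    fun a ha ↦ by simpa [Submodule.Quotient.mk_eq_zero] using h a ha
  rw [Submodule.map_comp q] at h₁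
  have := Submodule.finrank_mono hle
  have := Submodule.finrank_map_mkQ_add_finrank hQ
  have := Submodule.finrank_map_mkQ_add_finrank hQ'
  omega

end LinearAlgebra

section MulByVariables

variable {σ K : Type*} [Field K] {i j : σ}

theorem X_pow_dvd_of_le_map_mul_X (hij : i ≠ j) {V : Submodule K (MvPolynomial σ K)}
    (hV : V ≤ (V.comap (LinearMap.mulLeft K (X j))).map (LinearMap.mulLeft K (X i))) (n : ℕ) :
    ∀ v ∈ V, X i ^ n ∣ v := by
  induction n with
  | zero => exact fun v _ ↦ one_dvd v
  | succ n ih =>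
    intro v hv
    obtain ⟨w, hw, rfl⟩ := hV hv
    have hXi : ¬ (X i : MvPolynomial σ K) ∣ X j := X_dvd_X.not.mpr hij
    rw [pow_succ']
    exact mul_dvd_mul_left _ (X_prime.pow_dvd_of_dvd_mul_left n hXi (ih _ hw))

theorem finrank_inf_comap_mul_X_lt (hij : i ≠ j) (V : Submodule K (MvPolynomial σ K))
    [FiniteDimensional K V] (hV : V ≠ ⊥) :
    finrank K ↥(V.comap (LinearMap.mulLeft K (X i)) ⊓ V.comap (LinearMap.mulLeft K (X j))) <
      finrank K V := by
  set V' := V.comap (LinearMap.mulLeft K (X i)) ⊓ V.comap (LinearMap.mulLeft K (X j))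
  have hinj : Function.Injective (LinearMap.mulLeft K (X i : MvPolynomial σ K)) :=
    mul_right_injective₀ (X_ne_zero i)
  have hle : V'.map (LinearMap.mulLeft K (X i)) ≤ V := Submodule.map_le_iff_le_comap.mpr inf_le_left
  have hrank : finrank K ↥(V'.map (LinearMap.mulLeft K (X i))) = finrank K V' :=
    (Submodule.equivMapOfInjective _ hinj V').finrank_eq.symm
  -- otherwise `X i • V' = V`, and then every element of `V` is divisible by every power of `X i`
  refine (hrank ▸ Submodule.finrank_mono hle).lt_of_ne fun heq ↦ ?_
  have hVeq := Submodule.eq_of_le_of_finrank_eq hle (hrank.trans heq)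
  obtain ⟨v, hv, hv0⟩ := Submodule.exists_mem_ne_zero_of_ne_bot hV
  have hdvd := X_pow_dvd_of_le_map_mul_X hij
    (hVeq.symm.le.trans (Submodule.map_mono inf_le_right)) (degreeOf i v + 1) v hv
  obtain ⟨g, hg⟩ := hdvd
  have hg0 : g ≠ 0 := by rintro rfl; exact hv0 (by rw [hg, mul_zero])
  have := degreeOf_mul_X_self_pow_eq_add_of_ne_zero i (degreeOf i v + 1) hg0
  rw [mul_comm, ← hg] at this
  omega

theorem finrank_lt_finrank_map_mul_X_sup (hij : i ≠ j) (V : Submodule K (MvPolynomial σ K))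
    [FiniteDimensional K V] (hV : V ≠ ⊥) :
    finrank K V <
      finrank K ↥(V.map (LinearMap.mulLeft K (X i)) ⊔ V.map (LinearMap.mulLeft K (X j))) := by
  set V' := V.comap (LinearMap.mulLeft K (X i)) ⊓ V.comap (LinearMap.mulLeft K (X j))
  have hrank (k : σ) : finrank K ↥(V.map (LinearMap.mulLeft K (X k))) = finrank K V :=
    (Submodule.equivMapOfInjective _ (mul_right_injective₀ (X_ne_zero k)) V).finrank_eq.symm
  have hinf : V.map (LinearMap.mulLeft K (X i)) ⊓ V.map (LinearMap.mulLeft K (X j)) ≤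
      V'.map (LinearMap.mulLeft K (X i * X j)) := by
    rintro g ⟨⟨u, hu, rfl⟩, ⟨v, hv, hvu⟩⟩
    have hXj : ¬ (X j : MvPolynomial σ K) ∣ X i := X_dvd_X.not.mpr hij.symm
    obtain ⟨w, rfl⟩ := ((X_prime (i := j)).dvd_or_dvd ⟨v, hvu.symm⟩).resolve_left hXj
    simp only [LinearMap.mulLeft_apply] at hvu ⊢
    have hv : v = X i * w := mul_left_cancel₀ (X_ne_zero j) (by rw [hvu]; ring)
    subst hv
    exact ⟨w, ⟨hv, hu⟩, by simp only [LinearMap.mulLeft_apply]; ring⟩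
  have : FiniteDimensional K V' := by
    have : FiniteDimensional K ↥(V'.map (LinearMap.mulLeft K (X i))) :=
      Submodule.finiteDimensional_of_le (Submodule.map_le_iff_le_comap.mpr inf_le_left)
    exact .equiv (Submodule.equivMapOfInjective (LinearMap.mulLeft K (X i))
      (mul_right_injective₀ (X_ne_zero i)) V').symm
  have := Submodule.finrank_sup_add_finrank_inf_eq (V.map (LinearMap.mulLeft K (X i)))
    (V.map (LinearMap.mulLeft K (X j)))
  have := (Submodule.finrank_mono hinf).trans (Submodule.finrank_map_le _ V')
  have : finrank K V' < finrank K V := finrank_inf_comap_mul_X_lt hij V hV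
  have := hrank i
  have := hrank j
  omega

end MulByVariables

section QuotientImage

variable (K : Type*) {R : Type*} [Field K] [CommRing R] [Algebra K R]

abbrev quotientImage (J A : Ideal R) : Submodule K (R ⧸ J) :=
  (A.restrictScalars K).map (Ideal.Quotient.mkₐ K J).toLinearMap

variable {K} {J A A' : Ideal R}

theorem ker_mkₐ_toLinearMap :
    LinearMap.ker (Ideal.Quotient.mkₐ K J).toLinearMap = J.restrictScalars K := by
  ext; simp [Ideal.Quotient.eq_zero_iff_mem]

theorem quotientImage_mono (h : A ≤ A') : quotientImage K J A ≤ quotientImage K J A' :=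
  Submodule.map_mono (Submodule.restrictScalars_mono K h)

theorem quotientImage_top : quotientImage K J ⊤ = ⊤ := by
  rw [quotientImage, Submodule.restrictScalars_top, Submodule.map_top, LinearMap.range_eq_top]
  exact Ideal.Quotient.mkₐ_surjective K J

theorem quotientImage_eq_bot_iff : quotientImage K J A = ⊥ ↔ A ≤ J := by
  rw [quotientImage, eq_bot_iff, Submodule.map_le_iff_le_comap, Submodule.comap_bot,
    ker_mkₐ_toLinearMap, Submodule.restrictScalars_le]

theorem restrictScalars_map_mk_eq_quotientImage :
    (A.map (Ideal.Quotient.mk J)).restrictScalars K = quotientImage K J A := by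
  ext x
  simp [quotientImage, Ideal.mem_map_iff_of_surjective _ Ideal.Quotient.mk_surjective]

end QuotientImage

theorem Ideal.exists_inf_pow_le_mul {R : Type*} [CommRing R] [IsNoetherianRing R]
    (𝔪 I : Ideal R) : ∃ N, ∀ d ≥ N, I ⊓ 𝔪 ^ d ≤ 𝔪 * I := by
  obtain ⟨k, hk⟩ := Ideal.exists_pow_inf_eq_pow_smul 𝔪 I
  refine ⟨k + 1, fun d hd ↦ ?_⟩
  have := hk d (by omega)
  simp only [Ideal.smul_eq_mul, Ideal.mul_top] at this
  rw [inf_comm, this]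
  exact Ideal.mul_mono (Ideal.pow_le_self (by omega)) inf_le_right

section InitialForms

variable {σ K : Type*} [Field K]

local notation "𝔪" => idealOfVars σ K

def initialForms (J : Ideal (MvPolynomial σ K)) (d : ℕ) : Submodule K (MvPolynomial σ K) :=
  homogeneousSubmodule σ K d ⊓ (𝔪 ^ (d + 1) ⊔ J).restrictScalars K

variable {J J' : Ideal (MvPolynomial σ K)} {d : ℕ} {f : MvPolynomial σ K}

theorem initialForms_mono (h : J ≤ J') (d : ℕ) : initialForms J d ≤ initialForms J' d :=
  inf_le_inf_left _ (Submodule.restrictScalars_mono K (sup_le_sup_left h _))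

theorem homogeneousComponent_mem_initialForms (hfJ : f ∈ J) (hf : f ∈ 𝔪 ^ d) :
    homogeneousComponent d f ∈ initialForms J d :=
  ⟨homogeneousComponent_mem d f, Submodule.mem_sup.mpr
    ⟨_, neg_mem (sub_homogeneousComponent_mem_pow_succ hf), f, hfJ, by ring⟩⟩

theorem le_pow_of_initialForms_eq_bot {e : ℕ} (h : ∀ d < e, initialForms J d = ⊥) :
    J ≤ 𝔪 ^ e := by
  induction e with
  | zero => simp
  | succ e ih =>
    intro f hfJ
    have hf := ih (fun d hd ↦ h d (by omega)) hfJ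
    have h0 := homogeneousComponent_mem_initialForms hfJ hf
    rw [h e e.lt_succ_self, Submodule.mem_bot] at h0
    simpa [h0] using sub_homogeneousComponent_mem_pow_succ hf

theorem initialForms_pow_eq_bot {j : ℕ} (hd : d < j) : initialForms (𝔪 ^ j) d = ⊥ := by
  refine eq_bot_iff.mpr fun h ⟨hH, hsup⟩ ↦ ?_
  rw [sup_eq_left.mpr (Ideal.pow_le_pow_right hd)] at hsup
  rw [Submodule.mem_bot, ← homogeneousComponent_eq_self hH]
  exact homogeneousComponent_eq_zero_of_mem_pow_succ hsup

theorem map_mul_X_initialForms_le (i : σ) :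
    (initialForms J d).map (LinearMap.mulLeft K (X i)) ≤ initialForms (𝔪 * J) (d + 1) := by
  rintro _ ⟨h, ⟨hH, hsup⟩, rfl⟩
  refine ⟨by simpa [add_comm] using (isHomogeneous_X K i).mul hH, ?_⟩
  have := Ideal.mul_mem_mul (Ideal.subset_span ⟨i, rfl⟩ : X i ∈ 𝔪)
    (show h ∈ 𝔪 ^ (d + 1) ⊔ J from hsup)
  rwa [Ideal.mul_sup, ← pow_succ'] at this

theorem quotientImage_mul_self_le_span (I : Ideal (MvPolynomial σ K)) {s : Set (MvPolynomial σ K)}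
    (hs : Ideal.span s = I) :
    quotientImage K (𝔪 * I) I ≤ Submodule.span K (Ideal.Quotient.mk (𝔪 * I) '' s) := by
  rintro _ ⟨f, hf, rfl⟩
  change f ∈ I at hf
  rw [← hs] at hf
  induction hf using Submodule.span_induction with
  | mem z hz => exact Submodule.subset_span ⟨z, hz, rfl⟩
  | zero => simp
  | add y z _ _ hy hz => rw [map_add]; exact add_mem hy hz
  | smul r z hz hzmem =>
    have hzI : z ∈ I := hs ▸ hz
    have hr : (Ideal.Quotient.mkₐ K (𝔪 * I)).toLinearMap (r • z) =
        constantCoeff r • (Ideal.Quotient.mkₐ K (𝔪 * I)).toLinearMap z := by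
      rw [← map_smul, ← sub_eq_zero, ← map_sub, AlgHom.toLinearMap_apply,
        Ideal.Quotient.mkₐ_eq_mk, Ideal.Quotient.eq_zero_iff_mem, smul_eq_mul, smul_eq_C_mul,
        ← sub_mul]
      exact Ideal.mul_mem_mul (sub_C_constantCoeff_mem_idealOfVars r) hzI
    rw [hr]
    exact Submodule.smul_mem _ _ hzmem

theorem mkₐ_mem_quotientImage_inf_pow_succ {I : Ideal (MvPolynomial σ K)} (haI : f ∈ I)
    (ha : f ∈ 𝔪 ^ d) (h : homogeneousComponent d f ∈ initialForms (𝔪 * I) d) :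
    Ideal.Quotient.mkₐ K (𝔪 * I) f ∈ quotientImage K (𝔪 * I) (I ⊓ 𝔪 ^ (d + 1)) := by
  obtain ⟨b, hb, c, hc, hbc⟩ := Submodule.mem_sup.mp h.2
  refine ⟨f - c, ⟨sub_mem haI (Ideal.mul_le_right hc), ?_⟩, ?_⟩
  · rw [show f - c = (f - homogeneousComponent d f) + b by rw [← hbc]; ring]
    exact add_mem (sub_homogeneousComponent_mem_pow_succ ha) hb
  · simpa [Ideal.Quotient.eq_zero_iff_mem] using hc

variable [Finite σ]

instance (d : ℕ) : FiniteDimensional K (homogeneousSubmodule σ K d) :=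
  Module.Finite.iff_fg.mpr (homogeneousSubmodule_fg σ K d)

instance (J : Ideal (MvPolynomial σ K)) (d : ℕ) : FiniteDimensional K (initialForms J d) :=
  Submodule.finiteDimensional_of_le inf_le_left

section Colength

variable (J) [FiniteDimensional K (MvPolynomial σ K ⧸ J)]

theorem finrank_quotientImage_pow_add_finrank_initialForms (d : ℕ) :
    finrank K (quotientImage K J (𝔪 ^ d)) + finrank K (initialForms J d) =
      finrank K (quotientImage K J (𝔪 ^ (d + 1))) + finrank K (homogeneousSubmodule σ K d) := by
  have := Submodule.finrank_map_sup_add_finrank_inf_sup_ker (Ideal.Quotient.mkₐ K J).toLinearMap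
    (homogeneousSubmodule σ K d) ((𝔪 ^ (d + 1)).restrictScalars K)
  rwa [← pow_restrictScalars_eq_homogeneousSubmodule_sup, ker_mkₐ_toLinearMap,
    ← Submodule.restrictScalars_sup] at this

theorem finrank_quotient_eq_finrank_quotientImage_add_sum {e : ℕ}
    (h : ∀ d < e, initialForms J d = ⊥) :
    finrank K (MvPolynomial σ K ⧸ J) = finrank K (quotientImage K J (𝔪 ^ e)) +
      ∑ d ∈ Finset.range e, finrank K (homogeneousSubmodule σ K d) := by
  induction e with
  | zero => rw [pow_zero, Ideal.one_eq_top, quotientImage_top, finrank_top]; simp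
  | succ e ih =>
    have := finrank_quotientImage_pow_add_finrank_initialForms J e
    rw [h e e.lt_succ_self, finrank_bot] at this
    rw [ih fun d hd ↦ h d (by omega), Finset.sum_range_succ]
    omega

end Colength

instance (I : Ideal (MvPolynomial σ K)) (d : ℕ) :
    FiniteDimensional K (quotientImage K (𝔪 * I) (I ⊓ 𝔪 ^ d)) := by
  obtain ⟨s, hs⟩ := (IsNoetherian.noetherian I : I.FG)
  have := FiniteDimensional.span_of_finite K (s.finite_toSet.image (Ideal.Quotient.mk (𝔪 * I)))
  exact Submodule.finiteDimensional_of_le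
    ((quotientImage_mono inf_le_left).trans (quotientImage_mul_self_le_span I hs))

theorem finrank_quotientImage_inf_pow_add_finrank_initialForms_le (I : Ideal (MvPolynomial σ K))
    (d : ℕ) :
    finrank K (quotientImage K (𝔪 * I) (I ⊓ 𝔪 ^ d)) + finrank K (initialForms (𝔪 * I) d) ≤
      finrank K (quotientImage K (𝔪 * I) (I ⊓ 𝔪 ^ (d + 1))) + finrank K (initialForms I d) :=
  Submodule.finrank_map_add_finrank_le (φ := homogeneousComponent d)
    (quotientImage_mono (inf_le_inf_left I (Ideal.pow_le_pow_right d.le_succ)))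
    (initialForms_mono Ideal.mul_le_right d)
    (Submodule.map_le_iff_le_comap.mpr fun _ ha ↦ homogeneousComponent_mem_initialForms ha.1 ha.2)
    fun _ ha ↦ mkₐ_mem_quotientImage_inf_pow_succ ha.1 ha.2

end InitialForms

theorem le_succ_of_filtration_bounds {m ℓ ℓ' : ℕ → ℕ} {d₀ N : ℕ}
    (hstep : ∀ d, m d + ℓ' d ≤ m (d + 1) + ℓ d) (hℓ' : ∀ d, ℓ' d ≤ ℓ d)
    (hgrow : ∀ d, 0 < ℓ d → ℓ d < ℓ' (d + 1)) (hbound : ∀ d, ℓ d ≤ d + 1)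
    (hvanish : ∀ d ≥ N, m d = 0) (hlow : ∀ d < d₀, ℓ d = 0) (hpos : 0 < ℓ d₀) :
    m 0 ≤ d₀ + 1 := by
  have hbelow : ∀ e ≤ d₀, m 0 ≤ m e := by
    intro e he
    induction e with
    | zero => exact le_rfl
    | succ e ih =>
      have := hstep e
      have := hlow e (by omega)
      have := ih (by omega)
      omega
  have hchain : ∀ E ≥ d₀, 0 < ℓ E ∧ m 0 + (E - d₀) ≤ ℓ E + m (E + 1) := by
    intro E hE
    induction E, hE using Nat.le_induction with
    | base =>
      have := hbelow d₀ le_rfl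
      have := hstep d₀
      exact ⟨hpos, by omega⟩
    | succ E hE ih =>
      have := hgrow E ih.1
      have := hstep (E + 1)
      have := hℓ' (E + 1)
      exact ⟨by omega, by omega⟩
  have := (hchain (d₀ + N) (by omega)).2
  have := hvanish (d₀ + N + 1) (by omega)
  have := hbound (d₀ + N)
  omega

theorem sub_one_eq_and_eq_zero_of_two_mul_eq {n k d a : ℕ} (hk : k ≤ d + 1)
    (hn : 2 * n = 2 * a + d * (d + 1)) (hnk : n = k * (k - 1) / 2) : k - 1 = d ∧ a = 0 := by
  have := Nat.two_mul_div_two_of_even (Nat.even_mul_pred_self k)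
  obtain _ | t := k
  · simp only [zero_mul, zero_tsub, Nat.zero_div] at hnk ⊢
    subst hnk
    constructor <;> nlinarith
  · simp only [add_tsub_cancel_right] at this hnk ⊢
    have htd : t ≤ d := by omega
    have : d ≤ t := by nlinarith
    constructor <;> nlinarith

section TwoVariables

variable {K : Type*} [Field K]

local notation "𝔪" => idealOfVars (Fin 2) K

theorem finrank_homogeneousSubmodule_fin_two (d : ℕ) :
    finrank K (homogeneousSubmodule (Fin 2) K d) = d + 1 := by
  rw [finrank_homogeneousSubmodule]
  simp [add_comm]

section Colength

variable (J : Ideal (MvPolynomial (Fin 2) K)) [FiniteDimensional K (MvPolynomial (Fin 2) K ⧸ J)]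

theorem two_mul_finrank_quotient_eq {e : ℕ} (h : ∀ d < e, initialForms J d = ⊥) :
    2 * finrank K (MvPolynomial (Fin 2) K ⧸ J) =
      2 * finrank K (quotientImage K J (𝔪 ^ e)) + e * (e + 1) := by
  have hsum := Finset.sum_range_id_mul_two (e + 1)
  rw [Finset.sum_range_succ'] at hsum
  rw [finrank_quotient_eq_finrank_quotientImage_add_sum J h]
  simp only [finrank_homogeneousSubmodule_fin_two, add_tsub_cancel_right, add_zero] at hsum ⊢
  linarith

theorem exists_initialForms_ne_bot : ∃ d, initialForms J d ≠ ⊥ := by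
  by_contra! h
  have := two_mul_finrank_quotient_eq J (e := 2 * finrank K (MvPolynomial (Fin 2) K ⧸ J) + 1)
    fun d _ ↦ h d
  nlinarith

end Colength

theorem finrank_quotientImage_mul_self_le (I : Ideal (MvPolynomial (Fin 2) K)) {d₀ : ℕ}
    (hlow : ∀ d < d₀, initialForms I d = ⊥) (hne : initialForms I d₀ ≠ ⊥) :
    finrank K (quotientImage K (𝔪 * I) I) ≤ d₀ + 1 := by
  obtain ⟨N, hN⟩ := Ideal.exists_inf_pow_le_mul 𝔪 I
  have hgrow (d : ℕ) (hd : 0 < finrank K (initialForms I d)) :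
      finrank K (initialForms I d) < finrank K (initialForms (𝔪 * I) (d + 1)) :=
    (finrank_lt_finrank_map_mul_X_sup (i := 0) (j := 1) (by decide) _
      fun h ↦ hd.ne' (Submodule.finrank_eq_zero.mpr h)).trans_le
      (Submodule.finrank_mono (sup_le (map_mul_X_initialForms_le 0) (map_mul_X_initialForms_le 1)))
  have := le_succ_of_filtration_bounds (N := N)
    (finrank_quotientImage_inf_pow_add_finrank_initialForms_le I)
    (fun d ↦ Submodule.finrank_mono (initialForms_mono Ideal.mul_le_right d)) hgrow
    (fun d ↦ (Submodule.finrank_mono inf_le_left).trans (finrank_homogeneousSubmodule_fin_two d).le)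
    (fun d hd ↦ by simp [quotientImage_eq_bot_iff.mpr (hN d hd)])
    (fun d hd ↦ by simp [hlow d hd])
    (Nat.pos_of_ne_zero fun h ↦ hne (Submodule.finrank_eq_zero.mp h))
  rwa [pow_zero, Ideal.one_eq_top, inf_top_eq] at this

end TwoVariables

theorem mIdeal_eq_idealOfVars : mIdeal = idealOfVars (Fin 2) ℂ := by
  rw [mIdeal, idealOfVars]
  congr 1
  ext p
  simp [Fin.exists_fin_two, eq_comm]

theorem mu_eq_finrank_quotientImage (I : Ideal Rpoly) :
    mu I = finrank ℂ (quotientImage ℂ (idealOfVars (Fin 2) ℂ * I) I) := by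
  rw [mu, restrictScalars_map_mk_eq_quotientImage, mIdeal_eq_idealOfVars]

/-- If `I ⊴ ℂ[x,y]` has finite colength `n = dim_ℂ R/I` and `k = dim_ℂ I/(𝔪·I)`,
then `n = k(k-1)/2` if and only if `I = 𝔪^(k-1)`. -/
theorem stmt1 (I : Ideal Rpoly) (n k : ℕ)
    (hfin : FiniteDimensional ℂ (Rpoly ⧸ I))
    (hn : Module.finrank ℂ (Rpoly ⧸ I) = n)
    (hk : mu I = k) :
    n = k * (k - 1) / 2 ↔ I = mIdeal ^ (k - 1) := by
  rw [mu_eq_finrank_quotientImage] at hk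
  rw [mIdeal_eq_idealOfVars]
  constructor
  · intro h
    classical
    have hex := exists_initialForms_ne_bot I
    have hlow (d : ℕ) (hd : d < Nat.find hex) : initialForms I d = ⊥ :=
      not_not.mp (Nat.find_min hex hd)
    have hcol := two_mul_finrank_quotient_eq I hlow
    have hμ := finrank_quotientImage_mul_self_le I hlow (Nat.find_spec hex)
    rw [hn] at hcol
    rw [hk] at hμ
    obtain ⟨hkd, hzero⟩ := sub_one_eq_and_eq_zero_of_two_mul_eq hμ hcol h
    rw [hkd]
    exact le_antisymm (le_pow_of_initialForms_eq_bot hlow)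
      (quotientImage_eq_bot_iff.mp (Submodule.finrank_eq_zero.mp hzero))
  · intro h
    have hcol := two_mul_finrank_quotient_eq I (e := k - 1)
      fun d hd ↦ h ▸ initialForms_pow_eq_bot hd
    rw [quotientImage_eq_bot_iff.mpr h.ge, finrank_bot, hn] at hcol
    have hpred : k * (k - 1) = (k - 1) * (k - 1 + 1) := by
      obtain _ | k := k <;> simp [mul_comm]
    omega

end
end

section
/- For every m ≥ 1, the following identity holds in K[[q]] with K = ℚ(t): ∏_{d=1}^{∞} (1 − t^{d−1} q^d)^{−1} · ∑_{k=0}^{∞} (−1)^{k−m} · t^{k(k−1)/2 − km + m(m+1)/2} · [k choose m]_t · q^{k(k−1)/2} · ∏_{d=1}^{k} (1 − t^{d} q^{d})^{−1} = ∏_{i=1}^{m−1} (1 − t^{i+1})^{−1} · ∑_{a=1}^{m} (−1)^{a+1} · t^{a(a−1)/2 + m − 1} · [m choose a]_t · ∏_{d=0}^{∞} (1 − t^{d−a} q^{d}) · (1 − t^{d−1} q^{d})^{−1}. (The left-hand side is the generating function ∑_n E(B^{[n]}_m; t) q^n of the E-polynomials of the strata of the punctual Hilbert scheme by number of generators, and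 the right-hand side is its closed form.) -/
/-!
Write `Y = t q`, `E(z) = ∏_{d ≥ 1} (1 - z Y^d)` and `L_k` for the `k`-th summand of the series on
the left. The product on the left is `E(t⁻¹)`, and the product indexed by `a` on the right is
`(1 - t^{-a}) / (1 - t^{-1}) · E(t^{-a}) / E(t^{-1})`, so the identity says that `∑_k L_k` is a
finite linear combination of the `E(t^{-a})`.
Expand every `E(t^{-a})` by Euler's identity
`E(z) = ∑_j (-z)^j Y^{j(j+1)/2} / ((1 - Y) ⋯ (1 - Y^j))`, the `n → ∞` limit of the finite
q-binomial theorem `∏_{d<n} (1 - z Y^{d+1}) = ∑_j (-z)^j Y^{j(j+1)/2} [n choose j]_Y`.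
Collecting the `j`-th terms over `a`, the finite q-binomial theorem in `ℚ(t)` evaluates the sum
over `a`, and what is left is `Y^j L_j + (1 - Y^{j+1}) L_{j+1}`, which telescopes to `∑_k L_k`.
Convergence in `K[[q]]` is coefficientwise, that is `q`-adic, so all limits are controlled by
divisibility by powers of `q`.
-/

noncomputable section

/-- The field `K = ℚ(t)` of rational functions. -/
abbrev K : Type := RatFunc ℚ

/-- `K` is given the discrete topology. -/
instance : TopologicalSpace K := ⊥

/-- `K[[q]]` is given the topology of coefficientwise convergence, under which the
infinite products and sums below converge. -/
instance : TopologicalSpace (PowerSeries K) :=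
  TopologicalSpace.induced (fun f n => PowerSeries.coeff (R := K) n f) Pi.topologicalSpace

/-- The indeterminate `t` of `K = ℚ(t)`. -/
noncomputable def t : K := RatFunc.X

/-- The Gaussian binomial coefficient `[m choose a]_t ∈ ℚ(t)`:
`∏_{i=0}^{a-1} (1 - t^{m-i})/(1 - t^{i+1})` if `a ≤ m`, and `0` if `a > m`. -/
noncomputable def gb (m a : ℕ) : K :=
  if a ≤ m then ∏ i ∈ Finset.range a, (1 - t ^ (m - i)) / (1 - t ^ (i + 1)) else 0

open PowerSeries Filter Finset Topology

instance : DiscreteTopology K := ⟨rfl⟩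

theorem isInducing_coeff : IsInducing fun (f : K⟦X⟧) (n : ℕ) => coeff n f := ⟨rfl⟩

@[fun_prop]
theorem continuous_coeff (n : ℕ) : Continuous (coeff (R := K) n) :=
  (continuous_apply n).comp isInducing_coeff.continuous

instance : T2Space K⟦X⟧ :=
  IsEmbedding.t2Space ⟨isInducing_coeff, fun _ _ h => PowerSeries.ext (congrFun h)⟩

instance : IsTopologicalRing K⟦X⟧ where
  continuous_add := isInducing_coeff.continuous_iff.2 <| continuous_pi fun n => by
    simp only [Function.comp_apply, map_add]; fun_prop
  continuous_mul := isInducing_coeff.continuous_iff.2 <| continuous_pi fun n => by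
    simp only [Function.comp_apply, coeff_mul]; fun_prop
  continuous_neg := isInducing_coeff.continuous_iff.2 <| continuous_pi fun n => by
    simp only [Function.comp_apply, map_neg]; fun_prop

theorem tendsto_nhds_iff_coeff {α : Type*} {l : Filter α} {F : α → K⟦X⟧} {g : K⟦X⟧} :
    Tendsto F l (𝓝 g) ↔ ∀ n, ∀ᶠ x in l, coeff n (F x) = coeff n g := by
  simp [isInducing_coeff.tendsto_nhds_iff, tendsto_pi_nhds, nhds_discrete, Function.comp_def]

theorem tendsto_nhds_iff_X_pow_dvd {α : Type*} {l : Filter α} {F : α → K⟦X⟧}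
    {g : K⟦X⟧} :
    Tendsto F l (𝓝 g) ↔ ∀ n, ∀ᶠ x in l, X ^ n ∣ F x - g := by
  simp only [tendsto_nhds_iff_coeff, X_pow_dvd_iff, map_sub, sub_eq_zero]
  refine ⟨fun h n => ?_, fun h n => (h (n + 1)).mono fun x hx => hx n n.lt_succ_self⟩
  exact (eventually_all_finite (Set.finite_Iio n)).2 fun i _ => h i

theorem eq_of_forall_X_pow_dvd_sub {R : Type*} [CommRing R] {f g : R⟦X⟧}
    (h : ∀ n, X ^ n ∣ f - g) : f = g := by
  ext n
  simpa [sub_eq_zero] using X_pow_dvd_iff.1 (h (n + 1)) n n.lt_succ_self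

theorem dvd_prod_sub_one {R ι : Type*} [CommRing R] {a : R} {s : Finset ι} {f : ι → R}
    (h : ∀ i ∈ s, a ∣ f i - 1) : a ∣ ∏ i ∈ s, f i - 1 := by
  simpa [SModEq.sub_mem, Ideal.mem_span_singleton] using
    SModEq.prod (I := Ideal.span {a}) fun i hi =>
      (SModEq.sub_mem.2 (Ideal.mem_span_singleton.2 (h i hi)) : f i ≡ 1 [SMOD _])

theorem summable_of_X_pow_dvd {f : ℕ → K⟦X⟧} (h : ∀ n, ∀ᶠ j in atTop, X ^ n ∣ f j) :
    Summable f := by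
  refine ⟨mk fun n => ∑' j, coeff n (f j), ?_⟩
  rw [HasSum, SummationFilter.unconditional_filter, tendsto_nhds_iff_coeff]
  intro n
  obtain ⟨N, hN⟩ := eventually_atTop.1 (h (n + 1))
  have hzero : ∀ j ∉ range N, coeff n (f j) = 0 := fun j hj =>
    X_pow_dvd_iff.1 (hN j (by simpa using hj)) n n.lt_succ_self
  filter_upwards [eventually_ge_atTop (range N)] with s hs
  rw [coeff_mk, tsum_eq_sum hzero, map_sum]
  exact (sum_subset hs fun j _ hj => hzero j hj).symm

theorem multipliable_of_X_pow_dvd {f : ℕ → K⟦X⟧}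
    (h : ∀ n, ∀ᶠ j in atTop, X ^ n ∣ f j - 1) : Multipliable f := by
  choose N hN using fun n => eventually_atTop.1 (h n)
  refine ⟨mk fun n => coeff n (∏ j ∈ range (N (n + 1)), f j), ?_⟩
  rw [HasProd, SummationFilter.unconditional_filter, tendsto_nhds_iff_coeff]
  intro n
  filter_upwards [eventually_ge_atTop (range (N (n + 1)))] with s hs
  have hrest := dvd_prod_sub_one (s := s \ range (N (n + 1))) fun j hj =>
    hN (n + 1) j (by simpa using (mem_sdiff.1 hj).2)
  rw [coeff_mk, ← prod_sdiff hs]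
  simpa [sub_mul, sub_eq_zero] using
    X_pow_dvd_iff.1 (hrest.mul_right (∏ j ∈ range (N (n + 1)), f j)) n n.lt_succ_self

theorem Summable.X_pow_dvd_tsum_sub_sum {f : ℕ → K⟦X⟧} (hf : Summable f) {n N : ℕ}
    (h : ∀ j ≥ N, X ^ n ∣ f j) : X ^ n ∣ ∑' j, f j - ∑ j ∈ range N, f j := by
  obtain ⟨M, hM, hMN⟩ := ((tendsto_nhds_iff_X_pow_dvd.1 hf.hasSum.tendsto_sum_nat n).and
    (eventually_ge_atTop N)).exists
  rw [← sum_range_add_sum_Ico _ hMN] at hM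
  have := dvd_sum (s := Ico N M) fun j hj => h j (mem_Ico.1 hj).1
  convert dvd_sub this hM using 1
  ring

theorem Multipliable.X_pow_dvd_tprod_sub_prod {f : ℕ → K⟦X⟧} (hf : Multipliable f)
    {n N : ℕ} (h : ∀ j ≥ N, X ^ n ∣ f j - 1) :
    X ^ n ∣ ∏' j, f j - ∏ j ∈ range N, f j := by
  obtain ⟨M, hM, hMN⟩ := ((tendsto_nhds_iff_X_pow_dvd.1 hf.hasProd.tendsto_prod_nat n).and
    (eventually_ge_atTop N)).exists
  rw [← prod_range_mul_prod_Ico _ hMN] at hM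
  have := (dvd_prod_sub_one (s := Ico N M) fun j hj => h j (mem_Ico.1 hj).1).mul_left
    (∏ j ∈ range N, f j)
  convert dvd_sub this hM using 1
  ring

section GaussianBinomial

variable {A : Type*} [CommRing A]

def qBinom (y : A) : ℕ → ℕ → A
  | _, 0 => 1
  | 0, _ + 1 => 0
  | n + 1, k + 1 => qBinom y n k + y ^ (k + 1) * qBinom y n (k + 1)

@[simp]
theorem qBinom_zero_right (y : A) (n : ℕ) : qBinom y n 0 = 1 := by
  cases n <;> rfl

theorem qBinom_succ_succ (y : A) (n k : ℕ) :
    qBinom y (n + 1) (k + 1) = qBinom y n k + y ^ (k + 1) * qBinom y n (k + 1) := rfl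

theorem qBinom_eq_zero_of_lt (y : A) {n k : ℕ} (h : n < k) : qBinom y n k = 0 := by
  induction n generalizing k with
  | zero => obtain ⟨k, rfl⟩ := Nat.exists_eq_succ_of_ne_zero h.ne'; rfl
  | succ n ih =>
    obtain ⟨k, rfl⟩ := Nat.exists_eq_succ_of_ne_zero (Nat.ne_zero_of_lt h)
    rw [qBinom_succ_succ, ih (by omega), ih (by omega), mul_zero, add_zero]

theorem qBinom_mul_prod (y : A) (n k : ℕ) :
    qBinom y n k * ∏ i ∈ range k, (1 - y ^ (i + 1)) = ∏ i ∈ range k, (1 - y ^ (n - i)) := by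
  induction n generalizing k with
  | zero =>
    cases k with
    | zero => simp
    | succ k => simp [qBinom_eq_zero_of_lt y k.succ_pos, prod_range_succ']
  | succ n ih =>
    cases k with
    | zero => simp
    | succ k =>
      have hstep : (∏ i ∈ range k, (1 - y ^ (n - i))) *
            (1 - y ^ (k + 1) + y ^ (k + 1) * (1 - y ^ (n - k))) =
          (∏ i ∈ range k, (1 - y ^ (n - i))) * (1 - y ^ (n + 1)) := by
        rcases le_or_gt k n with hkn | hnk
        · rw [mul_sub, mul_one, ← pow_add, show k + 1 + (n - k) = n + 1 by omega]
          ring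
        · rw [prod_eq_zero (mem_range.2 hnk) (by simp), zero_mul, zero_mul]
      calc qBinom y (n + 1) (k + 1) * ∏ i ∈ range (k + 1), (1 - y ^ (i + 1))
          = (qBinom y n k * ∏ i ∈ range k, (1 - y ^ (i + 1))) * (1 - y ^ (k + 1))
            + y ^ (k + 1) * (qBinom y n (k + 1) * ∏ i ∈ range (k + 1), (1 - y ^ (i + 1))) := by
            rw [qBinom_succ_succ, prod_range_succ _ k]; ring
        _ = (∏ i ∈ range k, (1 - y ^ (n - i))) * (1 - y ^ (n + 1)) := by
            rw [ih, ih, prod_range_succ _ k, ← hstep]; ring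
        _ = ∏ i ∈ range (k + 1), (1 - y ^ (n + 1 - i)) := by
            rw [prod_range_succ' _ k]; simp

theorem sum_qBinom_mul_pow (y : A) (n : ℕ) (z : A) :
    ∑ k ∈ range (n + 1), (-1) ^ k * y ^ (k * (k - 1) / 2) * qBinom y n k * z ^ k =
      ∏ i ∈ range n, (1 - y ^ i * z) := by
  induction n generalizing z with
  | zero => simp
  | succ n ih =>
    set g : ℕ → A := fun k => (-1) ^ k * y ^ (k * (k - 1) / 2) * qBinom y n k * (y * z) ^ k
    have hshift : ∑ k ∈ range (n + 1), g (k + 1) = ∑ k ∈ range (n + 1), g k - 1 := by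
      have hg0 : g 0 = 1 := by simp [g]
      have hgn : g (n + 1) = 0 := by simp [g, qBinom_eq_zero_of_lt y n.lt_succ_self]
      linear_combination sum_range_succ g (n + 1) - sum_range_succ' g (n + 1) - hg0 + hgn
    have hterm (k : ℕ) : (-1) ^ (k + 1) * y ^ ((k + 1) * (k + 1 - 1) / 2) *
        qBinom y (n + 1) (k + 1) * z ^ (k + 1) = -z * g k + g (k + 1) := by
      simp only [g, Nat.triangle_succ, qBinom_succ_succ]
      ring
    have hprod : ∏ i ∈ range n, (1 - y ^ (i + 1) * z) = ∑ k ∈ range (n + 1), g k := by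
      rw [ih]
      exact prod_congr rfl fun i _ => by ring
    rw [sum_range_succ', prod_range_succ', sum_congr rfl fun k _ => hterm k, sum_add_distrib,
      ← mul_sum, hshift, hprod]
    simp
    ring

theorem prod_one_sub_mul_pow_succ (y z : A) (n : ℕ) :
    ∏ d ∈ range n, (1 - z * y ^ (d + 1)) =
      ∑ j ∈ range (n + 1), (-z) ^ j * y ^ ((j + 1) * j / 2) * qBinom y n j := by
  rw [show ∏ d ∈ range n, (1 - z * y ^ (d + 1)) = ∏ d ∈ range n, (1 - y ^ d * (y * z)) from
    prod_congr rfl fun d _ => by ring, ← sum_qBinom_mul_pow]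
  refine sum_congr rfl fun j _ => ?_
  have h := Nat.triangle_succ j
  rw [Nat.add_sub_cancel] at h
  rw [h]
  ring

end GaussianBinomial

theorem Nat.le_succ_mul_div_two (j : ℕ) : j ≤ (j + 1) * j / 2 :=
  (Nat.le_div_iff_mul_le two_pos).2 (by nlinarith [Nat.le_mul_self j])

section Euler

variable {y : K⟦X⟧}

def eulerTerm (y z : K⟦X⟧) (j : ℕ) : K⟦X⟧ :=
  (-z) ^ j * y ^ ((j + 1) * j / 2) * (∏ i ∈ range j, (1 - y ^ (i + 1)))⁻¹

theorem X_pow_dvd_eulerTerm (hy : X ∣ y) (z : K⟦X⟧) (j : ℕ) : X ^ j ∣ eulerTerm y z j :=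
  ((pow_dvd_pow_of_dvd_of_le hy (Nat.le_succ_mul_div_two j)).mul_left _).mul_right _

theorem X_pow_dvd_qBinom_sub_inv (hy : X ∣ y) {n j : ℕ} (hj : j ≤ n) :
    X ^ (n + 1 - j) ∣ qBinom y n j - (∏ i ∈ range j, (1 - y ^ (i + 1)))⁻¹ := by
  have hD := PowerSeries.mul_inv_cancel (∏ i ∈ range j, (1 - y ^ (i + 1)))
    (by rw [X_dvd_iff] at hy; simp [map_prod, hy])
  have hP : X ^ (n + 1 - j) ∣ ∏ i ∈ range j, (1 - y ^ (n - i)) - 1 :=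
    dvd_prod_sub_one fun i hi => by
      have hji : n + 1 - j ≤ n - i := by simp at hi; omega
      simpa using (pow_dvd_pow_of_dvd_of_le hy hji).neg_right
  rw [← qBinom_mul_prod] at hP
  convert hP.mul_right (∏ i ∈ range j, (1 - y ^ (i + 1)))⁻¹ using 1
  linear_combination -qBinom y n j * hD

theorem X_pow_dvd_prod_sub_sum_eulerTerm (hy : X ∣ y) (z : K⟦X⟧) (n : ℕ) :
    X ^ (n + 1) ∣
      ∏ d ∈ range n, (1 - z * y ^ (d + 1)) - ∑ j ∈ range (n + 1), eulerTerm y z j := by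
  rw [prod_one_sub_mul_pow_succ, ← sum_sub_distrib]
  refine dvd_sum fun j hj => ?_
  have hjn : j ≤ n := Nat.lt_succ_iff.1 (mem_range.1 hj)
  rw [eulerTerm, ← mul_sub, show n + 1 = j + (n + 1 - j) by omega, pow_add]
  exact mul_dvd_mul ((pow_dvd_pow_of_dvd_of_le hy (Nat.le_succ_mul_div_two j)).mul_left _)
    (X_pow_dvd_qBinom_sub_inv hy hjn)

theorem hasSum_eulerTerm (hy : X ∣ y) (z : K⟦X⟧) :
    HasSum (eulerTerm y z) (∏' d, (1 - z * y ^ (d + 1))) := by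
  have hfactor (n d : ℕ) (hd : n ≤ d) : X ^ n ∣ 1 - z * y ^ (d + 1) - 1 := by
    simpa using ((pow_dvd_pow_of_dvd_of_le hy (Nat.le_succ_of_le hd)).mul_left z).neg_right
  have hterm (n j : ℕ) (hj : n ≤ j) : X ^ n ∣ eulerTerm y z j :=
    (pow_dvd_pow X hj).trans (X_pow_dvd_eulerTerm hy z j)
  have hmul : Multipliable fun d => 1 - z * y ^ (d + 1) :=
    multipliable_of_X_pow_dvd fun n => eventually_atTop.2 ⟨n, hfactor n⟩
  have hsum : Summable (eulerTerm y z) :=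
    summable_of_X_pow_dvd fun n => eventually_atTop.2 ⟨n, hterm n⟩
  convert hsum.hasSum
  refine eq_of_forall_X_pow_dvd_sub fun n => ?_
  have h₁ := hmul.X_pow_dvd_tprod_sub_prod (hfactor n)
  have h₂ := (pow_dvd_pow X n.le_succ).trans (X_pow_dvd_prod_sub_sum_eulerTerm hy z n)
  have h₃ := hsum.X_pow_dvd_tsum_sub_sum fun j hj => hterm n j (Nat.le_of_succ_le hj)
  convert dvd_sub (dvd_add h₁ h₂) h₃ using 1
  ring

end Euler

theorem hasProd_inv_of_X_pow_dvd {g : ℕ → K⟦X⟧}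
    (hg : ∀ n, ∀ᶠ d in atTop, X ^ n ∣ g d - 1) (h0 : ∀ d, constantCoeff (g d) ≠ 0) :
    HasProd (fun d => (g d)⁻¹) (∏' d, g d)⁻¹ := by
  have hinv : Multipliable fun d => (g d)⁻¹ :=
    multipliable_of_X_pow_dvd fun n => (hg n).mono fun d hd => by
      convert (hd.mul_right (g d)⁻¹).neg_right using 1
      linear_combination PowerSeries.mul_inv_cancel _ (h0 d)
  have hone : (∏' d, g d) * ∏' d, (g d)⁻¹ = 1 := by
    rw [← (multipliable_of_X_pow_dvd hg).tprod_mul hinv]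
    simp [PowerSeries.mul_inv_cancel _ (h0 _)]
  have hc : constantCoeff (∏' d, g d) ≠ 0 :=
    left_ne_zero_of_mul_eq_one (by rw [← map_mul, hone, map_one])
  convert hinv.hasProd
  exact ((PowerSeries.eq_inv_iff_mul_eq_one hc).2 (by rw [mul_comm, hone])).symm

theorem tprod_one_sub_C_mul_pow_div {y : K⟦X⟧} (hy : X ∣ y) (u v : K) :
    ∏' d, (1 - C u * y ^ d) * (1 - C v * y ^ d)⁻¹ =
      C ((1 - u) / (1 - v)) * (∏' d, (1 - C u * y ^ (d + 1))) *
        (∏' d, (1 - C v * y ^ (d + 1)))⁻¹ := by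
  have hfactor (w : K) (n : ℕ) : ∀ᶠ d in atTop, X ^ n ∣ 1 - C w * y ^ (d + 1) - 1 :=
    eventually_atTop.2 ⟨n, fun d hd => by
      simpa using ((pow_dvd_pow_of_dvd_of_le hy (Nat.le_succ_of_le hd)).mul_left (C w)).neg_right⟩
  have hconst (d : ℕ) : constantCoeff (1 - C v * y ^ (d + 1)) ≠ 0 := by
    rw [X_dvd_iff] at hy
    simp [hy]
  have h := (multipliable_of_X_pow_dvd (hfactor u)).hasProd.mul
    (hasProd_inv_of_X_pow_dvd (hfactor v) hconst)
  have h0 : (1 - C u * y ^ 0) * (1 - C v * y ^ 0)⁻¹ = C ((1 - u) / (1 - v)) := by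
    rw [pow_zero, mul_one, mul_one, div_eq_mul_inv, map_mul, ← C_inv, map_sub, map_sub, map_one]
  rw [h.prod_range_mul (k := 1) |>.tprod_eq, prod_range_one, h0, mul_assoc]

theorem HasSum.add_sub_succ {G : Type*} [AddCommGroup G] [TopologicalSpace G]
    [IsTopologicalAddGroup G] {a b : ℕ → G} {A B : G} (ha : HasSum a A) (hb : HasSum b B) :
    HasSum (fun j => b j + a (j + 1) - b (j + 1)) (A - a 0 + b 0) := by
  convert (hb.add ((hasSum_nat_add_iff' 1).2 ha)).sub ((hasSum_nat_add_iff' 1).2 hb) using 1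
  simp only [range_one, sum_singleton]
  abel

theorem t_ne_zero : t ≠ 0 := RatFunc.X_ne_zero

theorem t_pow_ne_one {n : ℕ} (hn : n ≠ 0) : t ^ n ≠ 1 := by
  intro h
  have : (Polynomial.X : Polynomial ℚ) ^ n = 1 :=
    RatFunc.algebraMap_injective ℚ (by rw [map_pow, RatFunc.algebraMap_X, map_one]; exact h)
  simpa [hn] using congrArg Polynomial.natDegree this

theorem one_sub_t_pow_ne_zero {n : ℕ} (hn : n ≠ 0) : 1 - t ^ n ≠ 0 :=
  sub_ne_zero.2 (t_pow_ne_one hn).symm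

theorem prod_one_sub_t_pow_succ_ne_zero (s : Finset ℕ) : ∏ i ∈ s, (1 - t ^ (i + 1)) ≠ 0 :=
  prod_ne_zero_iff.2 fun i _ => one_sub_t_pow_ne_zero i.succ_ne_zero

theorem gb_mul_prod (j m : ℕ) :
    gb j m * ∏ i ∈ range m, (1 - t ^ (i + 1)) = ∏ i ∈ range m, (1 - t ^ (j - i)) := by
  by_cases h : m ≤ j
  · rw [gb, if_pos h, ← prod_mul_distrib]
    exact prod_congr rfl fun i _ => div_mul_cancel₀ _ (one_sub_t_pow_ne_zero i.succ_ne_zero)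
  · rw [gb, if_neg h, zero_mul, prod_eq_zero (mem_range.2 (not_le.1 h)) (by simp)]

theorem gb_eq_qBinom (m a : ℕ) : gb m a = qBinom t m a :=
  mul_right_cancel₀ (prod_one_sub_t_pow_succ_ne_zero (range a))
    ((gb_mul_prod m a).trans (qBinom_mul_prod t m a).symm)

theorem sum_Icc_gb_mul_pow (m : ℕ) (z : K) :
    ∑ a ∈ Icc 1 m, (-1) ^ a * t ^ (a * (a - 1) / 2) * gb m a * z ^ a =
      ∏ i ∈ range m, (1 - t ^ i * z) - 1 := by
  rw [← sum_qBinom_mul_pow, Nat.range_succ_eq_Icc_zero, Icc_eq_cons_Ioc (Nat.zero_le m), sum_cons]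
  simp [gb_eq_qBinom]
  rfl

theorem prod_one_sub_t_pow_mul_inv_pow (m j : ℕ) :
    ∏ i ∈ range m, (1 - t ^ i * t⁻¹ ^ j) =
      (-1) ^ m * t ^ (m * (m - 1) / 2) * t⁻¹ ^ (m * j) *
        (gb j m * ∏ i ∈ range m, (1 - t ^ (i + 1))) := by
  rw [gb_mul_prod]
  by_cases h : m ≤ j
  · have hfactor : ∀ i ∈ range m,
        1 - t ^ i * t⁻¹ ^ j = -1 * t ^ i * t⁻¹ ^ j * (1 - t ^ (j - i)) := by
      intro i hi
      have hij : t ^ i * t ^ (j - i) * t⁻¹ ^ j = 1 := by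
        rw [← pow_add, Nat.add_sub_cancel' (by simp at hi; omega), ← mul_pow,
          mul_inv_cancel₀ t_ne_zero, one_pow]
      linear_combination -hij
    rw [prod_congr rfl hfactor, prod_mul_distrib, prod_mul_distrib, prod_mul_distrib, prod_const,
      prod_pow_eq_pow_sum, sum_range_id, prod_const, card_range, ← pow_mul, mul_comm j]
  · have hj : j ∈ range m := mem_range.2 (not_le.1 h)
    rw [prod_eq_zero hj (by rw [← mul_pow, mul_inv_cancel₀ t_ne_zero, one_pow, sub_self]),
      prod_eq_zero hj (by simp), mul_zero]

theorem Int.natCast_triangle (n : ℕ) :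
    ((n * (n - 1) / 2 : ℕ) : ℤ) = (n : ℤ) * ((n : ℤ) - 1) / 2 := by
  cases n with
  | zero => rfl
  | succ n => rw [Int.natCast_div]; push_cast; ring_nf

theorem Int.mul_succ_div_two (x : ℤ) : x * (x + 1) / 2 = x * (x - 1) / 2 + x := by
  rw [show x * (x + 1) = x * (x - 1) + x * 2 by ring, Int.add_mul_ediv_right _ _ two_ne_zero]

def leftCoeff (m k : ℕ) : K :=
  (-1 : K) ^ ((k : ℤ) - (m : ℤ)) *
    t ^ ((k : ℤ) * ((k : ℤ) - 1) / 2 - (k : ℤ) * (m : ℤ) + (m : ℤ) * ((m : ℤ) + 1) / 2) *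
      gb k m

-- `(1 - t^{-a}) / (1 - t^{-1})` is the quotient of the `d = 0` factors of the right-hand products.
def rightWeight (m a : ℕ) : K :=
  (∏ i ∈ Icc 1 (m - 1), (1 - t ^ (i + 1)))⁻¹ *
    ((-1) ^ (a + 1) * t ^ (a * (a - 1) / 2 + m - 1) * gb m a) * ((1 - t⁻¹ ^ a) / (1 - t⁻¹))

theorem leftCoeff_eq (m k : ℕ) :
    leftCoeff m k = (-1) ^ k * (-1) ^ m * t ^ (k * (k - 1) / 2 + m * (m - 1) / 2 + m) *
      t⁻¹ ^ (k * m) * gb k m := by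
  have hsign : (-1 : K) ^ ((k : ℤ) - (m : ℤ)) = (-1) ^ k * (-1) ^ m := by
    rw [zpow_sub₀ (by norm_num), zpow_natCast, zpow_natCast, div_eq_mul_inv, ← inv_pow, inv_neg,
      inv_one]
  have hexp :
      (k : ℤ) * ((k : ℤ) - 1) / 2 - (k : ℤ) * (m : ℤ) + (m : ℤ) * ((m : ℤ) + 1) / 2 =
      ((k * (k - 1) / 2 + m * (m - 1) / 2 + m : ℕ) : ℤ) - ((k * m : ℕ) : ℤ) := by
    rw [Int.mul_succ_div_two, ← Int.natCast_triangle, ← Int.natCast_triangle]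
    push_cast
    ring
  rw [leftCoeff, hsign, hexp, zpow_sub₀ t_ne_zero, zpow_natCast, zpow_natCast, div_eq_mul_inv,
    ← inv_pow, mul_assoc _ (t ^ _)]

theorem sum_rightWeight_mul {m : ℕ} (hm : m ≠ 0) (j : ℕ) :
    ∑ a ∈ Icc 1 m, rightWeight m a * (-t⁻¹ ^ a) ^ j * t ^ ((j + 1) * j / 2) =
      t ^ j * leftCoeff m j + leftCoeff m (j + 1) := by
  obtain ⟨n, rfl⟩ := Nat.exists_eq_add_one_of_ne_zero hm
  set e := ∏ i ∈ Icc 1 n, (1 - t ^ (i + 1))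
  have hD : ∏ i ∈ range (n + 1), (1 - t ^ (i + 1)) = (1 - t) * e := by
    rw [prod_range_succ', mul_comm, zero_add, pow_one, range_eq_Ico,
      prod_Ico_add' (fun i => 1 - t ^ (i + 1)), zero_add, Ico_add_one_right_eq_Icc]
  set c := e⁻¹ * (1 - t⁻¹)⁻¹ * t ^ n * (-1) ^ j * t ^ ((j + 1) * j / 2)
  have hterm (a : ℕ) : rightWeight (n + 1) a * (-t⁻¹ ^ a) ^ j * t ^ ((j + 1) * j / 2) =
      c * ((-1) ^ a * t ^ (a * (a - 1) / 2) * gb (n + 1) a * (t⁻¹ ^ (j + 1)) ^ a) -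
        c * ((-1) ^ a * t ^ (a * (a - 1) / 2) * gb (n + 1) a * (t⁻¹ ^ j) ^ a) := by
    rw [rightWeight, Nat.add_sub_cancel,
      show a * (a - 1) / 2 + (n + 1) - 1 = a * (a - 1) / 2 + n by omega]
    ring
  -- By the q-binomial theorem the sum over `a` is `c (Π(t^{-j-1}) - Π(t^{-j}))` for
  -- `Π(z) = ∏_{i<m} (1 - t^i z)`, and `Π(t^{-j})` is a multiple of `[j choose m]_t`.
  rw [sum_congr rfl fun a _ => hterm a, sum_sub_distrib, ← mul_sum, ← mul_sum,
    sum_Icc_gb_mul_pow, sum_Icc_gb_mul_pow, prod_one_sub_t_pow_mul_inv_pow,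
    prod_one_sub_t_pow_mul_inv_pow, leftCoeff_eq, leftCoeff_eq, hD, Nat.add_sub_cancel]
  simp only [c, Nat.triangle_succ]
  rw [show (j + 1) * j / 2 = j * (j - 1) / 2 + j by simpa using Nat.triangle_succ j]
  have ht := t_ne_zero
  have ht1 : t - 1 ≠ 0 := sub_ne_zero.2 (by simpa using t_pow_ne_one one_ne_zero)
  have he : e ≠ 0 := prod_one_sub_t_pow_succ_ne_zero _
  simp only [inv_pow]
  field_simp
  ring

def tq : K⟦X⟧ := C t * X

theorem X_dvd_tq : X ∣ tq := dvd_mul_left X (C t)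

theorem tq_pow (n : ℕ) : tq ^ n = C (t ^ n) * X ^ n := by rw [tq, mul_pow, map_pow]

def leftTerm (m k : ℕ) : K⟦X⟧ :=
  C (leftCoeff m k) * X ^ (k * (k - 1) / 2) *
    (∏ d ∈ range k, (1 - C (t ^ (d + 1)) * X ^ (d + 1)))⁻¹

theorem summable_leftTerm (m : ℕ) : Summable (leftTerm m) := by
  refine summable_of_X_pow_dvd fun n => eventually_atTop.2 ⟨n + 1, fun k hk => ?_⟩
  obtain ⟨j, rfl⟩ : ∃ j, k = j + 1 := ⟨k - 1, by omega⟩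
  have hexp : n ≤ (j + 1) * (j + 1 - 1) / 2 := by
    rw [Nat.add_sub_cancel]
    exact (Nat.le_of_succ_le_succ hk).trans (Nat.le_succ_mul_div_two j)
  exact (pow_dvd_pow X hexp).trans (dvd_mul_of_dvd_left (dvd_mul_left _ _) _)

theorem summable_tq_pow_mul_leftTerm (m : ℕ) : Summable fun k => tq ^ k * leftTerm m k :=
  summable_of_X_pow_dvd fun n => eventually_atTop.2 ⟨n, fun _ hk =>
    ((pow_dvd_pow X hk).trans (pow_dvd_pow_of_dvd_of_le X_dvd_tq le_rfl)).mul_right _⟩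

theorem sum_C_rightWeight_mul_eulerTerm {m : ℕ} (hm : m ≠ 0) (j : ℕ) :
    ∑ a ∈ Icc 1 m, C (rightWeight m a) * eulerTerm tq (C (t⁻¹ ^ a)) j =
      tq ^ j * leftTerm m j + (1 - tq ^ (j + 1)) * leftTerm m (j + 1) := by
  set D := ∏ i ∈ range j, (1 - tq ^ (i + 1))
  have hden (k : ℕ) : ∏ d ∈ range k, (1 - C (t ^ (d + 1)) * X ^ (d + 1)) =
      ∏ i ∈ range k, (1 - tq ^ (i + 1)) := by simp only [tq_pow]
  have hinv : (1 - tq ^ (j + 1)) * (∏ i ∈ range (j + 1), (1 - tq ^ (i + 1)))⁻¹ = D⁻¹ := by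
    rw [prod_range_succ, PowerSeries.mul_inv_rev, ← mul_assoc,
      PowerSeries.mul_inv_cancel _ (by simp [tq]), one_mul]
  have htri : (j + 1) * j / 2 = j * (j - 1) / 2 + j := by simpa using Nat.triangle_succ j
  have hfirst :
      tq ^ j * leftTerm m j = C (t ^ j * leftCoeff m j) * X ^ ((j + 1) * j / 2) * D⁻¹ := by
    rw [leftTerm, hden, tq_pow, htri, map_mul, pow_add]
    ring
  have hsecond : (1 - tq ^ (j + 1)) * leftTerm m (j + 1) =
      C (leftCoeff m (j + 1)) * X ^ ((j + 1) * j / 2) * D⁻¹ := by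
    rw [leftTerm, hden, Nat.add_sub_cancel, ← hinv]
    ring
  calc _ = C (∑ a ∈ Icc 1 m, rightWeight m a * (-t⁻¹ ^ a) ^ j * t ^ ((j + 1) * j / 2)) *
        X ^ ((j + 1) * j / 2) * D⁻¹ := by
        simp only [eulerTerm, map_sum, sum_mul, tq_pow ((j + 1) * j / 2)]
        refine sum_congr rfl fun a _ => ?_
        simp only [map_mul, map_pow, map_neg]
        ring
    _ = _ := by
        rw [sum_rightWeight_mul hm, hfirst, hsecond, map_add]
        ring

theorem hasSum_leftTerm {m : ℕ} (hm : m ≠ 0) :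
    HasSum (leftTerm m)
      (∑ a ∈ Icc 1 m, C (rightWeight m a) * ∏' d, (1 - C (t⁻¹ ^ a) * tq ^ (d + 1))) := by
  have hsum := hasSum_sum fun a (_ : a ∈ Icc 1 m) =>
    (hasSum_eulerTerm X_dvd_tq (C (t⁻¹ ^ a))).mul_left (C (rightWeight m a))
  have htel := (summable_leftTerm m).hasSum.add_sub_succ (summable_tq_pow_mul_leftTerm m).hasSum
  simp only [pow_zero, one_mul, sub_add_cancel] at htel
  simp only [sum_C_rightWeight_mul_eulerTerm hm] at hsum
  convert (summable_leftTerm m).hasSum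
  refine hsum.unique (htel.congr_fun fun j => ?_)
  ring

theorem tprod_one_sub_C_t_pow_mul_X_pow :
    ∏' d : ℕ, (1 - C (t ^ d) * X ^ (d + 1)) = ∏' d, (1 - C t⁻¹ * tq ^ (d + 1)) := by
  refine tprod_congr fun d => ?_
  rw [tq_pow, ← mul_assoc, ← map_mul, pow_succ' t d, inv_mul_cancel_left₀ t_ne_zero]

theorem tprod_one_sub_C_t_zpow_mul_X_pow_div (a : ℕ) :
    ∏' d : ℕ,
        (1 - C (t ^ ((d : ℤ) - (a : ℤ))) * X ^ d) * (1 - C (t ^ ((d : ℤ) - 1)) * X ^ d)⁻¹ =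
      C ((1 - t⁻¹ ^ a) / (1 - t⁻¹)) * (∏' d, (1 - C (t⁻¹ ^ a) * tq ^ (d + 1))) *
        (∏' d, (1 - C t⁻¹ * tq ^ (d + 1)))⁻¹ := by
  rw [← tprod_one_sub_C_mul_pow_div X_dvd_tq]
  refine tprod_congr fun d => ?_
  rw [tq_pow, ← mul_assoc, ← mul_assoc, ← map_mul, ← map_mul, zpow_sub₀ t_ne_zero,
    zpow_sub_one₀ t_ne_zero, zpow_natCast, zpow_natCast, div_eq_mul_inv, inv_pow,
    mul_comm (t ^ d), mul_comm (t ^ d)]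

open PowerSeries in
/-- The closed form for the generating function `∑_n E(B^{[n]}_m; t) qⁿ` of the
E-polynomials of the strata of the punctual Hilbert scheme (Theorem `genEBmn`):
`∏_{d=1}^∞ (1 - t^{d-1} q^d)⁻¹ ·
   ∑_{k=0}^∞ (-1)^{k-m} t^{k(k-1)/2 - km + m(m+1)/2} [k choose m]_t q^{k(k-1)/2}
     ∏_{d=1}^{k} (1 - t^d q^d)⁻¹
 = ∏_{i=1}^{m-1} (1 - t^{i+1})⁻¹ ·
   ∑_{a=1}^{m} (-1)^{a+1} t^{a(a-1)/2 + m - 1} [m choose a]_t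
     ∏_{d=0}^∞ (1 - t^{d-a} q^d)(1 - t^{d-1} q^d)⁻¹`. -/
theorem stmt9 (m : ℕ) (hm : 1 ≤ m) :
    (∏' d : ℕ, (1 - C (R := K) (t ^ d) * X ^ (d + 1)))⁻¹ *
        ∑' k : ℕ,
          C (R := K) ((-1 : K) ^ ((k : ℤ) - (m : ℤ)) *
              t ^ ((k : ℤ) * ((k : ℤ) - 1) / 2 - (k : ℤ) * (m : ℤ)
                    + (m : ℤ) * ((m : ℤ) + 1) / 2) *
              gb k m) *
            X ^ (k * (k - 1) / 2) *
            (∏ d ∈ Finset.range k, (1 - C (R := K) (t ^ (d + 1)) * X ^ (d + 1)))⁻¹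
      = C (R := K) (∏ i ∈ Finset.Icc 1 (m - 1), (1 - t ^ (i + 1)))⁻¹ *
          ∑ a ∈ Finset.Icc 1 m,
            C (R := K) ((-1 : K) ^ (a + 1) * t ^ (a * (a - 1) / 2 + m - 1) * gb m a) *
              ∏' d : ℕ,
                (1 - C (R := K) (t ^ ((d : ℤ) - (a : ℤ))) * X ^ d) *
                  (1 - C (R := K) (t ^ ((d : ℤ) - 1)) * X ^ d)⁻¹ := by
  show _ * ∑' k, leftTerm m k = _
  rw [tprod_one_sub_C_t_pow_mul_X_pow, (hasSum_leftTerm (by omega)).tsum_eq, mul_sum, mul_sum]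
  refine sum_congr rfl fun a _ => ?_
  rw [tprod_one_sub_C_t_zpow_mul_X_pow_div, rightWeight]
  simp only [map_mul]
  ring
end
end

section
/- For every r ≥ 1, the following identity holds in ℚ[[q]]: ∑_{n=0}^{∞} ( ∑_{λ partition of n+r} binom(d(λ), r) ) q^n = q^{r(r−1)/2} · ∏_{d=1}^{∞} (1 − q^d)^{−1} · ∏_{d=1}^{r} (1 − q^d)^{−1}, where d(λ) is the number of distinct part sizes of λ and binom(d(λ), r) is the ordinary binomial coefficient. -/
/-!
Choosing `r` elbows of `λ` means choosing an `r`-set `S` of its distinct part sizes, and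
removing one copy of each part in `S` leaves an arbitrary partition of `|λ| - ΣS`. So the series
is the partition generating function `∏_d (1 - q^d)⁻¹` times `D_r = ∑_S q^{ΣS}`, the sum over
`r`-sets `S` of positive integers. Deleting `1` from `S` if present and then lowering every
element by `1` gives `D_{r+1} = q^{r+1} (D_{r+1} + D_r)`, whence
`D_r = q^{r(r+1)/2} ∏_{d ≤ r} (1 - q^d)⁻¹`; indexing by `|λ| - r` lowers the exponent to
`r(r-1)/2`. The recursion is run on the `r`-subsets of `{1, …, N}`, whose generating function
agrees with `D_r` modulo `q^{N+1}`.
-/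

noncomputable section

/-- `ℚ[[q]]` is given the topology of coefficientwise convergence, under which the
infinite product below converges. -/
instance : TopologicalSpace (PowerSeries ℚ) :=
  TopologicalSpace.induced (fun f n => PowerSeries.coeff (R := ℚ) n f) Pi.topologicalSpace

open Finset PowerSeries

theorem PowerSeries.WithPiTopology.instTopologicalSpace_eq_induced_coeff (R : Type*)
    [Semiring R] [TopologicalSpace R] :
    WithPiTopology.instTopologicalSpace R =
      TopologicalSpace.induced (fun f n ↦ coeff n f) Pi.topologicalSpace := by
  refine le_antisymm (continuous_iff_le_induced.1 (continuous_pi (continuous_coeff R))) ?_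
  let _ := TopologicalSpace.induced (fun f : R⟦X⟧ ↦ fun n ↦ coeff n f) Pi.topologicalSpace
  refine (@continuous_id_iff_le _ _ (WithPiTopology.instTopologicalSpace R)).1
    (@continuous_pi _ _ _ _ _ _ fun d ↦ ?_)
  rw [show (fun f : R⟦X⟧ ↦ id f d) = coeff (d ()) by rw [coeff_def rfl]; rfl]
  exact (continuous_apply (d ())).comp (continuous_induced_dom (f := fun f n ↦ coeff n f))

section EulerProduct

open scoped PowerSeries.WithPiTopology

variable {R : Type*} [CommRing R] [TopologicalSpace R] [IsTopologicalRing R] [T2Space R]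

theorem PowerSeries.WithPiTopology.tprod_one_sub_X_pow_mul_mk_card_partition :
    (∏' i, (1 - X ^ (i + 1) : R⟦X⟧)) * mk (fun n ↦ (Fintype.card n.Partition : R)) = 1 := by
  have hP := Nat.Partition.hasProd_powerSeriesMk_card_restricted R (fun _ ↦ True)
  simp only [if_true, Nat.Partition.restricted, implies_true, filter_true, card_univ] at hP
  refine ((multipliable_one_sub_X_pow R).hasProd.mul hP).unique ?_
  convert hasProd_one with i
  simp_rw [pow_mul]
  exact one_sub_mul_tsum_pow_of_constantCoeff_eq_zero (by simp)

end EulerProduct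

namespace Nat.Partition

theorem sum_parts_sub_add {n : ℕ} {s : Multiset ℕ} (p : n.Partition) (h : s ≤ p.parts) :
    (p.parts - s).sum + s.sum = n := by
  rw [← Multiset.sum_add, tsub_add_cancel_of_le h, p.parts_sum]

def partitionWithPartsEquiv {n : ℕ} {s : Multiset ℕ} (hs : ∀ i ∈ s, 0 < i) (h : s.sum ≤ n) :
    {p : n.Partition // s ≤ p.parts} ≃ (n - s.sum).Partition where
  toFun p := ⟨p.1.parts - s,
    fun hi ↦ p.1.parts_pos (Multiset.mem_of_le (Multiset.sub_le_self _ _) hi),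
    by have := sum_parts_sub_add p.1 p.2; omega⟩
  invFun q := ⟨⟨q.parts + s, by grind [q.parts_pos], by rw [Multiset.sum_add, q.parts_sum]; omega⟩,
    Multiset.le_add_left _ _⟩
  left_inv p := Subtype.ext <| Partition.ext <| tsub_add_cancel_of_le p.2
  right_inv q := Partition.ext <| add_tsub_cancel_right _ _

theorem card_filter_le_parts {n : ℕ} {s : Multiset ℕ} (hs : ∀ i ∈ s, 0 < i) :
    #{p : n.Partition | s ≤ p.parts} =
      if s.sum ≤ n then Fintype.card (n - s.sum).Partition else 0 := by
  split_ifs with h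
  · rw [← Fintype.card_subtype, Fintype.card_congr (partitionWithPartsEquiv hs h)]
  · refine Finset.card_eq_zero.2 (filter_eq_empty_iff.2 fun p _ hp ↦ h ?_)
    have := sum_parts_sub_add p hp
    omega

theorem sum_choose_card_toFinset_parts (m r : ℕ) :
    ∑ p : m.Partition, p.parts.toFinset.card.choose r =
      ∑ S ∈ (Icc 1 m).powersetCard r,
        if ∑ i ∈ S, i ≤ m then Fintype.card (m - ∑ i ∈ S, i).Partition else 0 := by
  have hchoose (p : m.Partition) : p.parts.toFinset.card.choose r =
      #{S ∈ (Icc 1 m).powersetCard r | S ⊆ p.parts.toFinset} := by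
    have hsub : p.parts.toFinset ⊆ Icc 1 m := fun i hi ↦ by
      rw [Multiset.mem_toFinset] at hi
      exact mem_Icc.2 ⟨p.parts_pos hi, le_of_mem_parts hi⟩
    rw [← card_powersetCard]
    congr 1
    ext S
    simp only [mem_powersetCard, mem_filter]
    grind
  calc ∑ p : m.Partition, p.parts.toFinset.card.choose r
      = ∑ p : m.Partition, #{S ∈ (Icc 1 m).powersetCard r | S ⊆ p.parts.toFinset} := by
        simp_rw [hchoose]
    _ = ∑ S ∈ (Icc 1 m).powersetCard r, #{p : m.Partition | S ⊆ p.parts.toFinset} :=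
        sum_card_bipartiteAbove_eq_sum_card_bipartiteBelow _
    _ = _ := sum_congr rfl fun S hS ↦ ?_
  have hpos : ∀ i ∈ S.val, 0 < i := fun i hi ↦ (mem_Icc.1 ((mem_powersetCard.1 hS).1 hi)).1
  have hle (p : m.Partition) : S ⊆ p.parts.toFinset ↔ S.val ≤ p.parts := by
    rw [Multiset.le_iff_subset S.nodup]
    simp [Finset.subset_iff, Multiset.subset_iff]
  simp_rw [hle, card_filter_le_parts hpos, sum_val, id]

end Nat.Partition

theorem Finset.sum_map_addRightEmbedding_one (S : Finset ℕ) :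
    ∑ i ∈ S.map (addRightEmbedding 1), i = ∑ i ∈ S, i + #S := by
  simp [sum_add_distrib]

section SubsetSumGenFun

variable (R : Type*) [CommRing R]

def subsetSumGenFun (r N : ℕ) : R⟦X⟧ :=
  ∑ S ∈ (Icc 1 N).powersetCard r, X ^ (∑ i ∈ S, i)

theorem subsetSumGenFun_succ_succ (r N : ℕ) :
    subsetSumGenFun R (r + 1) (N + 1) =
      X ^ (r + 1) * (subsetSumGenFun R (r + 1) N + subsetSumGenFun R r N) := by
  set I := (Icc 1 N).map (addRightEmbedding 1)
  have hI : Icc 1 (N + 1) = insert 1 I := by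
    rw [show I = Icc (1 + 1) (N + 1) from map_add_right_Icc 1 N 1,
      insert_Icc_add_one_left_eq_Icc (by omega)]
  have h1 : 1 ∉ I := by simp [I]
  have hdisj : Disjoint (I.powersetCard (r + 1)) ((I.powersetCard r).image (insert 1)) := by
    refine disjoint_left.2 fun S hS hS' ↦ ?_
    obtain ⟨T, -, rfl⟩ := mem_image.1 hS'
    exact h1 ((mem_powersetCard.1 hS).1 (mem_insert_self 1 T))
  have hinj : Set.InjOn (insert 1) (I.powersetCard r : Set (Finset ℕ)) := fun S hS T hT h ↦ by
    have hS1 : 1 ∉ S := fun h' ↦ h1 ((mem_powersetCard.1 hS).1 h')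
    have hT1 : 1 ∉ T := fun h' ↦ h1 ((mem_powersetCard.1 hT).1 h')
    rw [← erase_insert hS1, ← erase_insert hT1, h]
  rw [subsetSumGenFun, hI, powersetCard_succ_insert h1, sum_union hdisj, sum_image hinj]
  simp only [I, powersetCard_map, sum_map]
  rw [mul_add, subsetSumGenFun, subsetSumGenFun, mul_sum, mul_sum]
  congr 1 <;> refine sum_congr rfl fun S hS ↦ ?_ <;>
    simp only [RelEmbedding.coe_toEmbedding, mapEmbedding_apply]
  · rw [sum_map_addRightEmbedding_one, (mem_powersetCard.1 hS).2, pow_add, mul_comm]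
  · rw [sum_insert fun h ↦ h1 (map_subset_map.2 (mem_powersetCard.1 hS).1 h),
      sum_map_addRightEmbedding_one, (mem_powersetCard.1 hS).2, ← pow_add]
    ring_nf

theorem X_pow_dvd_subsetSumGenFun_mul_prod_sub (r N : ℕ) :
    (X : R⟦X⟧) ^ (N + 1) ∣ subsetSumGenFun R r N * ∏ d ∈ range r, (1 - X ^ (d + 1)) -
      X ^ (∑ d ∈ range r, (d + 1)) := by
  induction r generalizing N with
  | zero => simp [subsetSumGenFun]
  | succ r ihr =>
    induction N with
    | zero =>
      have hempty : (Icc 1 0).powersetCard (r + 1) = ∅ := powersetCard_eq_empty.2 (by simp)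
      rw [subsetSumGenFun, hempty, sum_empty, zero_mul, zero_sub, dvd_neg]
      exact pow_dvd_pow X (by rw [sum_range_succ]; omega)
    | succ N ihN =>
      obtain ⟨a, ha⟩ := ihN
      obtain ⟨b, hb⟩ := ihr N
      refine ⟨X ^ r * (a + b * (1 - X ^ (r + 1))), ?_⟩
      rw [prod_range_succ, sum_range_succ, pow_add] at ha ⊢
      rw [subsetSumGenFun_succ_succ]
      linear_combination X ^ (r + 1) * ha + X ^ (r + 1) * (1 - X ^ (r + 1)) * hb

theorem coeff_subsetSumGenFun_mul_mk_card_partition (r m : ℕ) :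
    coeff m (subsetSumGenFun R r m * mk fun n ↦ (Fintype.card n.Partition : R)) =
      ∑ p : m.Partition, (p.parts.toFinset.card.choose r : R) := by
  rw [subsetSumGenFun, sum_mul, map_sum]
  simp_rw [coeff_X_pow_mul', coeff_mk]
  simpa [apply_ite] using
    congrArg (Nat.cast : ℕ → R) (Nat.Partition.sum_choose_card_toFinset_parts m r).symm

end SubsetSumGenFun

theorem coeff_subsetSumGenFun_mul {k : Type*} [Field k] (r N : ℕ) (F : k⟦X⟧) :
    coeff N (subsetSumGenFun k r N * F) =
      coeff N (X ^ (∑ d ∈ range r, (d + 1)) * (∏ d ∈ range r, (1 - X ^ (d + 1)))⁻¹ * F) := by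
  set Q : k⟦X⟧ := ∏ d ∈ range r, (1 - X ^ (d + 1))
  have hQ : Q * Q⁻¹ = 1 := PowerSeries.mul_inv_cancel Q (by simp [Q, map_prod])
  obtain ⟨c, hc⟩ := X_pow_dvd_subsetSumGenFun_mul_prod_sub k r N
  have hdiff : subsetSumGenFun k r N * F - X ^ (∑ d ∈ range r, (d + 1)) * Q⁻¹ * F =
      X ^ (N + 1) * (c * Q⁻¹ * F) := by
    linear_combination (Q⁻¹ * F) * hc - subsetSumGenFun k r N * F * hQ
  rw [← sub_eq_zero, ← map_sub, hdiff, coeff_X_pow_mul', if_neg (by omega)]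

open PowerSeries in
theorem stmt12_general (r : ℕ) :
    PowerSeries.mk
        (fun n => ∑ l : (n + r).Partition, ((l.parts.toFinset.card).choose r : ℚ)) =
      X ^ (r * (r - 1) / 2) * (∏' d : ℕ, (1 - X ^ (d + 1) : PowerSeries ℚ))⁻¹ *
        (∏ d ∈ Finset.range r, (1 - X ^ (d + 1) : PowerSeries ℚ))⁻¹ := by
  have hEP : (∏' d : ℕ, (1 - X ^ (d + 1) : ℚ⟦X⟧)) *
      mk (fun n ↦ (Fintype.card n.Partition : ℚ)) = 1 := by
    convert WithPiTopology.tprod_one_sub_X_pow_mul_mk_card_partition (R := ℚ) using 4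
    exact (WithPiTopology.instTopologicalSpace_eq_induced_coeff ℚ).symm
  have hP : mk (fun n ↦ (Fintype.card n.Partition : ℚ)) =
      (∏' d : ℕ, (1 - X ^ (d + 1) : ℚ⟦X⟧))⁻¹ :=
    (eq_inv_iff_mul_eq_one (left_ne_zero_of_mul_eq_one (by rw [← map_mul, hEP, map_one]))).2
      (by rw [mul_comm, hEP])
  have hexp : ∑ d ∈ range r, (d + 1) = r + r * (r - 1) / 2 := by
    rw [sum_add_distrib, sum_range_id]
    simp [add_comm]
  ext n
  rw [coeff_mk, ← coeff_X_pow_mul _ r n, ← coeff_subsetSumGenFun_mul_mk_card_partition,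
    coeff_subsetSumGenFun_mul, hexp, pow_add, ← hP]
  congr 1
  ring

open PowerSeries in
/-- For `r ≥ 1`, counting pairs of a partition `λ` of `n + r` with an `r`-element set
of elbows (the torus-fixed points of the refined Hilbert scheme `H^{[n,n+r]}`):
`∑_{n=0}^∞ (∑_{λ ⊢ n+r} binom(d(λ), r)) qⁿ
   = q^{r(r-1)/2} ∏_{d=1}^∞ (1 - q^d)⁻¹ ∏_{d=1}^{r} (1 - q^d)⁻¹`,
where `d(λ)` is the number of distinct part sizes of `λ`. -/
theorem stmt12 (r : ℕ) (hr : 1 ≤ r) :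
    PowerSeries.mk
        (fun n => ∑ l : (n + r).Partition, ((l.parts.toFinset.card).choose r : ℚ)) =
      X ^ (r * (r - 1) / 2) * (∏' d : ℕ, (1 - X ^ (d + 1) : PowerSeries ℚ))⁻¹ *
        (∏ d ∈ Finset.range r, (1 - X ^ (d + 1) : PowerSeries ℚ))⁻¹ :=
  stmt12_general r
end
end
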